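/- arXiv:1004.2480 — 3 statements merged into one kernel-verified Lean document; each statement's English description precedes it below -/
import Mathlib

section
/- Let M/K be a finite Galois extension of local fields and let L be a subfield of M containing K that is normal over K. Suppose M/L is abelian of exponent r and K contains a primitive r-th root of unity. Then VC(M/K) implies VC(M/L). Moreover, under these hypotheses, every element x ∈ M that is normal over K is also normal over L. -/
/-- A local field structure on a field `K`: a normalized (surjective) discrete
valuation `v : K* ↠ ℤ`, extended by a junk value at `0`, with respect to which
`K` is complete. -/
structure LocalFieldStruct (K : Type) [Field K] where
  /-- the valuation; its value at `0` is irrelevant -/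
  v : K → ℤ
  v_mul : ∀ x y : K, x ≠ 0 → y ≠ 0 → v (x * y) = v x + v y
  v_add : ∀ x y : K, x ≠ 0 → y ≠ 0 → x + y ≠ 0 → min (v x) (v y) ≤ v (x + y)
  v_surj : ∀ n : ℤ, ∃ x : K, x ≠ 0 ∧ v x = n
  complete : ∀ a : ℕ → K,
      (∀ N : ℤ, ∃ M : ℕ, ∀ m : ℕ, M ≤ m → ∀ n : ℕ, M ≤ n →
        a m = a n ∨ N ≤ v (a m - a n)) →
      ∃ x : K, ∀ N : ℤ, ∃ M : ℕ, ∀ n : ℕ, M ≤ n → a n = x ∨ N ≤ v (a n - x)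

namespace LocalFieldStruct

variable {K L : Type} [Field K] [Field L]

/-- `x` lies in the valuation ring `O_K`. -/
def Integral (w : LocalFieldStruct K) (x : K) : Prop :=
  x = 0 ∨ 0 ≤ w.v x

/-- The residue characteristic of `K` is the prime `p`, i.e. `p` maps to `0`
in the residue field of the valuation ring. -/
def ResidueCharP (w : LocalFieldStruct K) (p : ℕ) : Prop :=
  p.Prime ∧ ((p : K) = 0 ∨ 0 < w.v (p : K))

/-- `K` has mixed characteristic `(0, p)`: `K` has characteristic `0` and its
residue field has characteristic `p > 0`. -/
def MixedChar (w : LocalFieldStruct K) (p : ℕ) : Prop :=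
  CharZero K ∧ p.Prime ∧ 0 < w.v (p : K)

/-- `e` is the ramification index `e_{L/K}`: the valuation of `L` restricted to
`K` is `e` times the valuation of `K`. -/
def IsRamificationIndex (wK : LocalFieldStruct K) (wL : LocalFieldStruct L)
    [Algebra K L] (e : ℕ) : Prop :=
  0 < e ∧ ∀ x : K, x ≠ 0 → wL.v (algebraMap K L x) = (e : ℤ) * wK.v x

/-- `d` is the valuation `d_{L/K}` of the different of `L/K`, characterized by
`Tr_{L/K}(𝔭_L^i) ⊆ O_K ↔ i ≥ -d` for all `i : ℤ`. -/
def IsDifferentVal (wK : LocalFieldStruct K) (wL : LocalFieldStruct L)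
    [Algebra K L] (d : ℤ) : Prop :=
  ∀ i : ℤ,
    (∀ x : L, (x ≠ 0 → i ≤ wL.v x) → wK.Integral (Algebra.trace K L x)) ↔ -d ≤ i

end LocalFieldStruct

/-- `x` is a normal basis generator of `L` over `K`: the Galois conjugates of
`x` form a `K`-basis of `L`. -/
def IsNormalElement (K : Type) [Field K] {L : Type} [Field L] [Algebra K L]
    (x : L) : Prop :=
  LinearIndependent K (fun σ : L ≃ₐ[K] L => σ x) ∧
    Submodule.span K (Set.range fun σ : L ≃ₐ[K] L => σ x) = ⊤

/-- The valuation criterion `VC(L/K)`, for an extension with ramification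
index `e` and different of valuation `d`: every nonzero `x ∈ L` with
`v_L(x) ≡ -d-1 (mod e)` is a normal basis generator of `L` over `K`. -/
def VC (K : Type) [Field K] {L : Type} [Field L] [Algebra K L]
    (wL : LocalFieldStruct L) (e : ℕ) (d : ℤ) : Prop :=
  ∀ x : L, x ≠ 0 → Int.ModEq (e : ℤ) (wL.v x) (-d - 1) → IsNormalElement K x

/-! If `K` contains the `r`-th roots of unity, the abelian group `H = Gal(M/L)` of exponent
`r` has `|H|` characters `χ : H → Kˣ`, which by Dedekind's lemma span the `L`-valued functions
on `H`. Applying `∑ σ, χ(σ)⁻¹ σ` to an `L`-linear relation `∑ τ, b τ • τ x = 0` yields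
`(∑ τ, b τ * χ τ) • ∑ σ, χ(σ)⁻¹ • σ x = 0`, and the second factor is nonzero because the
conjugates of `x` are `K`-linearly independent; so `b` is orthogonal to every character, hence
`b = 0`.

For the valuation criterion, `Tr_{M/L}(𝔭_M^i) = 𝔭_L^q` with `q = ⌊(i + d_{M/L}) / e_{M/L}⌋`, so
by transitivity of the trace, whether `Tr_{M/K}(𝔭_M^i) ⊆ O_K` depends only on `q`. Since
`-d_{M/K}` is the least `i` for which this holds, `q` must jump there, i.e.
`e_{M/L} ∣ d_{M/L} - d_{M/K}`. Hence every `x` in the valuation class of `VC(M/L)` is an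
`L`-multiple of an element in the class of `VC(M/K)`. -/

theorem Int.dvd_of_sub_one_ediv_ne {e n : ℤ} (he : 0 < e) (h : (n - 1) / e ≠ n / e) : e ∣ n := by
  by_contra hn
  have hle : (n - 1) / e ≤ n / e := Int.ediv_le_ediv he (by omega)
  have hmul : e * (n / e) ≤ n - 1 := by
    have := Int.mul_ediv_self_le (x := n) he.ne'
    have : e * (n / e) ≠ n := fun h => hn ⟨_, h.symm⟩
    omega
  exact h (le_antisymm hle (Int.le_ediv_of_mul_le he (by linarith)))

section Characters

variable {G K L : Type*} [CommGroup G] [Fintype G] [Field K] [Field L] [Algebra K L]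

theorem span_characters_eq_top [HasEnoughRootsOfUnity K (Monoid.exponent G)] :
    Submodule.span L (Set.range fun (χ : G →* Kˣ) (g : G) => algebraMap K L (χ g)) = ⊤ := by
  have hcard := CommGroup.card_monoidHom_of_hasEnoughRootsOfUnity G K
  have : Finite (G →* Kˣ) := Nat.finite_of_card_ne_zero (by rw [hcard]; exact Nat.card_pos.ne')
  have := Fintype.ofFinite (G →* Kˣ)
  let toL : (G →* Kˣ) → (G →* L) := fun χ =>
    ((algebraMap K L : K →* L).comp (Units.coeHom K)).comp χ
  have htoL : Function.Injective toL := fun χ χ' h => by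
    ext g
    simpa [toL] using DFunLike.congr_fun h g
  refine ((linearIndependent_monoidHom G L).comp toL htoL).span_eq_top_of_card_eq_finrank' ?_
  rw [Module.finrank_fintype_fun_eq_card, ← Nat.card_eq_fintype_card, hcard,
    Nat.card_eq_fintype_card]

theorem eq_zero_of_forall_sum_mul_character_eq_zero [HasEnoughRootsOfUnity K (Monoid.exponent G)]
    {b : G → L} (hb : ∀ χ : G →* Kˣ, ∑ g, b g * algebraMap K L (χ g) = 0) : b = 0 := by
  classical
  have hzero : Fintype.linearCombination L b = 0 :=
    LinearMap.ext_on_range span_characters_eq_top fun χ => by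
      simpa [Fintype.linearCombination_apply, mul_comm] using hb χ
  funext g
  simpa using LinearMap.congr_fun hzero (Pi.single g 1)

end Characters

theorem IsNormalElement.smul_iff {L M : Type} [Field L] [Field M] [Algebra L M] {c : L}
    (hc : c ≠ 0) {x : M} :
    IsNormalElement L (c • x) ↔ IsNormalElement L x := by
  let f : M ≃ₗ[L] M := LinearEquiv.smulOfNeZero L M c hc
  have hconj : (fun σ : M ≃ₐ[L] M => σ (c • x)) =
      (f : M →ₗ[L] M) ∘ fun σ : M ≃ₐ[L] M => σ x := by
    funext σ
    exact map_smul σ c x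
  rw [IsNormalElement, IsNormalElement, hconj, LinearMap.linearIndependent_iff (f : M →ₗ[L] M)
    f.ker, Set.range_comp, Submodule.span_image, Submodule.map_eq_top_iff]

section Galois

variable {K L M : Type} [Field K] [Field L] [Field M] [Algebra K L] [Algebra L M] [Algebra K M]
  [IsScalarTower K L M] [FiniteDimensional L M]

theorem sum_mul_character_eq_zero {x : M}
    (hx : LinearIndependent K fun τ : M ≃ₐ[L] M => τ x) (χ : (M ≃ₐ[L] M) →* Kˣ)
    {b : (M ≃ₐ[L] M) → L} (hb : ∑ τ, b τ • τ x = 0) :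
    ∑ τ, b τ * algebraMap K L (χ τ) = 0 := by
  let ψ : (M ≃ₐ[L] M) →* L := ((algebraMap K L : K →* L).comp (Units.coeHom K)).comp χ
  let Φ : M →ₗ[L] M := ∑ σ, ψ σ⁻¹ • σ.toLinearMap
  have hΦ : ∀ τ : M ≃ₐ[L] M, Φ (τ x) = ψ τ • Φ x := by
    intro τ
    simp only [Φ, LinearMap.sum_apply, LinearMap.smul_apply, Finset.smul_sum]
    refine Fintype.sum_equiv (Equiv.mulRight τ) _ _ fun σ => ?_
    rw [smul_smul, ← map_mul, Equiv.coe_mulRight, mul_inv_rev, mul_inv_cancel_left]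
    rfl
  have hΦx : Φ x ≠ 0 := by
    have hsum : ∑ σ : M ≃ₐ[L] M, ((χ σ⁻¹ : Kˣ) : K) • σ x = Φ x := by
      simp only [Φ, LinearMap.sum_apply, LinearMap.smul_apply]
      exact Finset.sum_congr rfl fun σ _ => (algebraMap_smul L _ _).symm
    intro h
    simpa using Fintype.linearIndependent_iff.mp hx _ (hsum.trans h) 1
  have hrel : (∑ τ, b τ * ψ τ) • Φ x = 0 := by
    have := congrArg Φ hb
    simpa only [map_sum, map_smul, hΦ, smul_smul, map_zero, ← Finset.sum_smul] using this
  exact (smul_eq_zero.mp hrel).resolve_right hΦx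

theorem IsNormalElement.tower_top [IsGalois L M]
    (habelian : ∀ σ τ : M ≃ₐ[L] M, σ * τ = τ * σ)
    (hζ : ∃ ζ : K, IsPrimitiveRoot ζ (Monoid.exponent (M ≃ₐ[L] M))) {x : M}
    (hx : IsNormalElement K x) : IsNormalElement L x := by
  let _ : CommGroup (M ≃ₐ[L] M) := { mul_comm := habelian }
  have : HasEnoughRootsOfUnity K (Monoid.exponent (M ≃ₐ[L] M)) := ⟨hζ, inferInstance⟩
  have hindepK : LinearIndependent K fun τ : M ≃ₐ[L] M => τ x :=
    hx.1.comp _ (AlgEquiv.restrictScalars_injective K)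
  have hindep : LinearIndependent L fun τ : M ≃ₐ[L] M => τ x :=
    Fintype.linearIndependent_iff.mpr fun b hb => congrFun <|
      eq_zero_of_forall_sum_mul_character_eq_zero fun χ => sum_mul_character_eq_zero hindepK χ hb
  refine ⟨hindep, hindep.span_eq_top_of_card_eq_finrank ?_⟩
  rw [← Nat.card_eq_fintype_card, IsGalois.card_aut_eq_finrank]

end Galois

namespace LocalFieldStruct

variable {K L M : Type} [Field K] [Field L] [Field M]

/-- `Tr_{L/K}(𝔭_L^i) ⊆ O_K`. -/
def TraceIntegral (wK : LocalFieldStruct K) (wL : LocalFieldStruct L) [Algebra K L] (i : ℤ) :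
    Prop :=
  ∀ x : L, (x ≠ 0 → i ≤ wL.v x) → wK.Integral (Algebra.trace K L x)

section Tower

variable [Algebra L M] {wL : LocalFieldStruct L} {wM : LocalFieldStruct M} {e : ℕ} {d : ℤ}

theorem IsRamificationIndex.v_smul (he : IsRamificationIndex wL wM e) {c : L} {x : M}
    (hc : c ≠ 0) (hx : x ≠ 0) : wM.v (c • x) = e * wL.v c + wM.v x := by
  rw [Algebra.smul_def, wM.v_mul _ _ ((map_ne_zero _).mpr hc) hx, he.2 c hc]

theorem IsDifferentVal.ediv_le_v_trace (hd : IsDifferentVal wL wM d)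
    (he : IsRamificationIndex wL wM e) {i : ℤ} {x : M} (hx : x ≠ 0 → i ≤ wM.v x)
    (htr : Algebra.trace L M x ≠ 0) :
    (i + d) / e ≤ wL.v (Algebra.trace L M x) := by
  have hx0 : x ≠ 0 := by rintro rfl; exact htr (map_zero _)
  have hquot : e * ((i + d) / e) ≤ i + d := Int.mul_ediv_self_le (by exact_mod_cast he.1.ne')
  obtain ⟨π, hπ, hvπ⟩ := wL.v_surj (-((i + d) / e))
  have hint := (hd (i - e * ((i + d) / e))).mpr (by linarith) (π • x) fun _ => by
    rw [he.v_smul hπ hx0, hvπ]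
    linarith [hx hx0]
  rw [map_smul, smul_eq_mul] at hint
  rcases hint with h | h
  · exact absurd h (mul_ne_zero hπ htr)
  · rw [wL.v_mul _ _ hπ htr, hvπ] at h
    linarith

theorem IsDifferentVal.exists_trace_eq (hd : IsDifferentVal wL wM d)
    (he : IsRamificationIndex wL wM e) (i : ℤ) {y : L} (hy : y ≠ 0 → (i + d) / e ≤ wL.v y) :
    ∃ x : M, (x ≠ 0 → i ≤ wM.v x) ∧ Algebra.trace L M x = y := by
  rcases eq_or_ne y 0 with rfl | hy0
  · exact ⟨0, fun h => absurd rfl h, map_zero _⟩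
  have hquot : i + d < e * ((i + d) / e) + e := Int.lt_mul_ediv_self_add (by exact_mod_cast he.1)
  have hnot := mt (hd (i - e * ((i + d) / e + 1))).mp (by linarith)
  simp only [Integral, not_forall, not_or, not_le, exists_prop] at hnot
  obtain ⟨z, hz, htr, hvtr⟩ := hnot
  have hz0 : z ≠ 0 := by rintro rfl; exact htr (map_zero _)
  have ha : y / Algebra.trace L M z ≠ 0 := div_ne_zero hy0 htr
  have hva : (i + d) / e + 1 ≤ wL.v (y / Algebra.trace L M z) := by
    have := wL.v_mul _ _ ha htr
    rw [div_mul_cancel₀ _ htr] at this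
    linarith [hy hy0]
  refine ⟨(y / Algebra.trace L M z) • z, fun _ => ?_, ?_⟩
  · rw [he.v_smul ha hz0]
    linarith [mul_le_mul_of_nonneg_left hva (Int.natCast_nonneg e), hz hz0]
  · rw [map_smul, smul_eq_mul, div_mul_cancel₀ _ htr]

variable [Algebra K L] [Algebra K M] [IsScalarTower K L M] [FiniteDimensional K M]
  (wK : LocalFieldStruct K)

theorem traceIntegral_iff_of_tower (he : IsRamificationIndex wL wM e)
    (hd : IsDifferentVal wL wM d) (i : ℤ) :
    TraceIntegral wK wM i ↔ TraceIntegral wK wL ((i + d) / e) := by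
  have : FiniteDimensional L M := .right K L M
  have : FiniteDimensional K L := .left K L M
  constructor
  · intro h y hy
    obtain ⟨x, hx, rfl⟩ := hd.exists_trace_eq he i hy
    rw [Algebra.trace_trace]
    exact h x hx
  · intro h x hx
    rw [← Algebra.trace_trace (S := L)]
    exact h _ (hd.ediv_le_v_trace he hx)

theorem IsDifferentVal.dvd_sub_of_tower {dMK : ℤ} (he : IsRamificationIndex wL wM e)
    (hdMK : IsDifferentVal wK wM dMK) (hdML : IsDifferentVal wL wM d) : (e : ℤ) ∣ d - dMK := by
  refine Int.dvd_of_sub_one_ediv_ne (by exact_mod_cast he.1) fun h => ?_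
  have hnot : ¬ TraceIntegral wK wM (-dMK - 1) := fun h => by linarith [(hdMK _).mp h]
  have hyes : TraceIntegral wK wM (-dMK) := (hdMK _).mpr le_rfl
  rw [traceIntegral_iff_of_tower wK he hdML] at hnot hyes
  rw [show -dMK - 1 + d = d - dMK - 1 by ring, h, show d - dMK = -dMK + d by ring] at hnot
  exact hnot hyes

end Tower

end LocalFieldStruct

open LocalFieldStruct in
theorem VC.of_tower {K L M : Type} [Field K] [Field L] [Field M] [Algebra K M] [Algebra L M]
    {wL : LocalFieldStruct L} {wM : LocalFieldStruct M} {eMK e : ℕ} {dMK d : ℤ}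
    (he : IsRamificationIndex wL wM e) (hdvd : (e : ℤ) ∣ d - dMK)
    (htop : ∀ x : M, IsNormalElement K x → IsNormalElement L x) (hVC : VC K wM eMK dMK) :
    VC L wM e d := by
  intro x hx hmod
  obtain ⟨D, hD⟩ := hdvd
  obtain ⟨m, hm⟩ := hmod.dvd
  obtain ⟨c, hc, hvc⟩ := wL.v_surj (m + D)
  have hv : wM.v (c • x) = -dMK - 1 := by
    rw [he.v_smul hc hx, hvc]
    linarith
  exact (IsNormalElement.smul_iff hc).mp <|
    htop _ (hVC _ (smul_ne_zero hc hx) (hv ▸ Int.ModEq.refl _))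

open LocalFieldStruct in
theorem statement9_general {K L M : Type} [Field K] [Field L] [Field M]
    [Algebra K L] [Algebra L M] [Algebra K M] [IsScalarTower K L M]
    [FiniteDimensional K M] [IsGalois L M]
    (habelian : ∀ σ τ : M ≃ₐ[L] M, σ * τ = τ * σ)
    (r : ℕ) (hr : Monoid.exponent (M ≃ₐ[L] M) = r)
    (hζ : ∃ ζ : K, IsPrimitiveRoot ζ r)
    (wK : LocalFieldStruct K) (wL : LocalFieldStruct L) (wM : LocalFieldStruct M)
    (eMK : ℕ)
    (dMK : ℤ) (hdMK : IsDifferentVal wK wM dMK)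
    (eML : ℕ) (heML : IsRamificationIndex wL wM eML)
    (dML : ℤ) (hdML : IsDifferentVal wL wM dML) :
    (VC K wM eMK dMK → VC L wM eML dML) ∧
      (∀ x : M, IsNormalElement K x → IsNormalElement L x) := by
  have : FiniteDimensional L M := .right K L M
  have htop : ∀ x : M, IsNormalElement K x → IsNormalElement L x :=
    fun _ => IsNormalElement.tower_top habelian (hr ▸ hζ)
  exact ⟨VC.of_tower heML (hdMK.dvd_sub_of_tower wK heML hdML) htop, htop⟩

open LocalFieldStruct in
/-- **Lemma (topkummer).** Let `M/K` be a finite Galois extension of local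
fields and let `L` be an intermediate field which is normal over `K`.  If
`M/L` is abelian of exponent `r` and `K` contains a primitive `r`-th root of
unity, then `VC(M/K)` implies `VC(M/L)`; moreover every `x ∈ M` which is
normal over `K` is also normal over `L`. -/
theorem statement9 {K L M : Type} [Field K] [Field L] [Field M]
    [Algebra K L] [Algebra L M] [Algebra K M] [IsScalarTower K L M]
    [FiniteDimensional K M] [IsGalois K M] [Normal K L] [IsGalois L M]
    (habelian : ∀ σ τ : M ≃ₐ[L] M, σ * τ = τ * σ)
    (r : ℕ) (hr : Monoid.exponent (M ≃ₐ[L] M) = r)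
    (hζ : ∃ ζ : K, IsPrimitiveRoot ζ r)
    (wK : LocalFieldStruct K) (wL : LocalFieldStruct L) (wM : LocalFieldStruct M)
    (eMK : ℕ) (heMK : IsRamificationIndex wK wM eMK)
    (dMK : ℤ) (hdMK : IsDifferentVal wK wM dMK)
    (eML : ℕ) (heML : IsRamificationIndex wL wM eML)
    (dML : ℤ) (hdML : IsDifferentVal wL wM dML) :
    (VC K wM eMK dMK → VC L wM eML dML) ∧
      (∀ x : M, IsNormalElement K x → IsNormalElement L x) :=
  statement9_general habelian r hr hζ wK wL wM eMK dMK hdMK eML heML dML hdML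
end

section
/- Let L/K be a totally ramified Kummer extension of local fields whose degree is a power of the residue characteristic p. Then VC(L/K) holds if and only if L is a unit root Kummer extension of K. -/
theorem Fin.eq_of_intCast_modEq {n : ℕ} {i j : Fin n} (h : (i : ℤ) ≡ j [ZMOD n]) :
    i = j := by
  have hi : ((i : ℕ) : ℤ) % n = i := Int.emod_eq_of_lt (by positivity) (by exact_mod_cast i.2)
  have hj : ((j : ℕ) : ℤ) % n = j := Int.emod_eq_of_lt (by positivity) (by exact_mod_cast j.2)
  ext
  unfold Int.ModEq at h
  omega

open Polynomial in
theorem Module.End.exists_eigenvector_mem_of_pow_eq_one {K V : Type*} [Field K] [AddCommGroup V]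
    [Module K V] [FiniteDimensional K V] {m : ℕ} (hm : 0 < m) {ζ : K} (hζ : IsPrimitiveRoot ζ m)
    {f : Module.End K V} (hf : f ^ m = 1) {W : Submodule K V} (hW : W ≠ ⊥)
    (hfW : ∀ w ∈ W, f w ∈ W) : ∃ c : K, ∃ w ∈ W, w ≠ 0 ∧ f w = c • w := by
  have : Nontrivial W := Submodule.nontrivial_iff_ne_bot.mpr hW
  set g := f.restrict hfW
  have hg : aeval g (X ^ m - C 1 : K[X]) = 0 := by
    have : g ^ m = 1 := by
      ext w
      simp [g, Module.End.pow_restrict, hf]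
    simp [this]
  have hdeg : (minpoly K g).degree ≠ 0 := (minpoly.degree_pos (Algebra.IsIntegral.isIntegral g)).ne'
  obtain ⟨c, hc⟩ := ((X_pow_sub_one_splits hζ).of_dvd (X_pow_sub_C_ne_zero hm 1)
    (minpoly.dvd K g hg)).exists_eval_eq_zero hdeg
  obtain ⟨w, hw, hw0⟩ := (hasEigenvalue_iff_isRoot.mpr hc).exists_hasEigenvector
  exact ⟨c, w, w.2, by simpa using hw0, congrArg Subtype.val (mem_eigenspace_iff.mp hw)⟩

theorem Module.End.exists_common_eigenvector {K V ι : Type*} [Field K] [AddCommGroup V]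
    [Module K V] [FiniteDimensional K V] {m : ℕ} (hm : 0 < m) {ζ : K} (hζ : IsPrimitiveRoot ζ m)
    {f : ι → Module.End K V} (hcomm : ∀ i j, Commute (f i) (f j)) (hf : ∀ i, f i ^ m = 1)
    (s : Finset ι) {W : Submodule K V} (hW : W ≠ ⊥) (hfW : ∀ i, ∀ w ∈ W, f i w ∈ W) :
    ∃ w ∈ W, w ≠ 0 ∧ ∀ i ∈ s, ∃ c : K, f i w = c • w := by
  classical
  induction s using Finset.induction_on generalizing W with
  | empty =>
    obtain ⟨w, hw, hw0⟩ := Submodule.exists_mem_ne_zero_of_ne_bot hW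
    exact ⟨w, hw, hw0, by simp⟩
  | insert i s _ ih =>
    obtain ⟨c, w, hw, hw0, hwc⟩ := exists_eigenvector_mem_of_pow_eq_one hm hζ (hf i) hW (hfW i)
    have hmem : ∀ v, v ∈ W ⊓ (f i).eigenspace c ↔ v ∈ W ∧ f i v = c • v := fun v ↦ by
      rw [Submodule.mem_inf, mem_eigenspace_iff]
    obtain ⟨v, hv, hv0, hvs⟩ := ih (W := W ⊓ (f i).eigenspace c)
      (Submodule.ne_bot_iff _ |>.mpr ⟨w, (hmem w).mpr ⟨hw, hwc⟩, hw0⟩)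
      (fun j v hv ↦ (hmem _).mpr ⟨hfW j v ((hmem v).mp hv).1, by
        rw [← Module.End.mul_apply, (hcomm i j).eq, Module.End.mul_apply, ((hmem v).mp hv).2,
          map_smul]⟩)
    refine ⟨v, ((hmem v).mp hv).1, hv0, ?_⟩
    simp only [Finset.mem_insert, forall_eq_or_imp]
    exact ⟨⟨c, ((hmem v).mp hv).2⟩, hvs⟩

namespace LocalFieldStruct

section Valuation

variable {F : Type} [Field F] (w : LocalFieldStruct F)

theorem v_one : w.v 1 = 0 := by
  have h := w.v_mul 1 1 one_ne_zero one_ne_zero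
  rw [one_mul] at h
  omega

theorem v_neg {x : F} (hx : x ≠ 0) : w.v (-x) = w.v x := by
  have h1 := w.v_mul (-1) (-1) (by simp) (by simp)
  have h2 := w.v_mul (-1) x (by simp) hx
  rw [neg_mul_neg, one_mul, v_one] at h1
  rw [neg_one_mul] at h2
  omega

theorem v_inv {x : F} (hx : x ≠ 0) : w.v x⁻¹ = -w.v x := by
  have h := w.v_mul x x⁻¹ hx (inv_ne_zero hx)
  rw [mul_inv_cancel₀ hx, v_one] at h
  omega

theorem v_pow {x : F} (hx : x ≠ 0) (n : ℕ) : w.v (x ^ n) = n * w.v x := by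
  induction n with
  | zero => simp [v_one]
  | succ n ih =>
    rw [pow_succ, w.v_mul _ _ (pow_ne_zero n hx) hx, ih]
    push_cast
    ring

theorem v_add_of_lt {x y : F} (hx : x ≠ 0) (hy : y ≠ 0) (h : w.v x < w.v y) :
    x + y ≠ 0 ∧ w.v (x + y) = w.v x := by
  have hxy : x + y ≠ 0 := by
    intro h0
    rw [eq_neg_of_add_eq_zero_right h0, v_neg w hx] at h
    exact lt_irrefl _ h
  have h1 := w.v_add x y hx hy hxy
  have h2 := w.v_add (x + y) (-y) hxy (neg_ne_zero.mpr hy) (by simpa using hx)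
  rw [add_neg_cancel_right, v_neg w hy] at h2
  refine ⟨hxy, ?_⟩
  omega

theorem v_add_of_ne {x y : F} (hx : x ≠ 0) (hy : y ≠ 0) (h : w.v x ≠ w.v y) :
    x + y ≠ 0 ∧ w.v (x + y) = min (w.v x) (w.v y) := by
  rcases h.lt_or_gt with h | h
  · rw [min_eq_left h.le]
    exact v_add_of_lt w hx hy h
  · rw [min_eq_right h.le, add_comm]
    exact v_add_of_lt w hy hx h

theorem v_sub_of_ne {x y : F} (hx : x ≠ 0) (hy : y ≠ 0) (h : w.v x ≠ w.v y) :
    x - y ≠ 0 ∧ w.v (x - y) = min (w.v x) (w.v y) := by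
  rw [sub_eq_add_neg, ← v_neg w hy]
  exact v_add_of_ne w hx (neg_ne_zero.mpr hy) (by rwa [v_neg w hy])

theorem v_sum_of_pairwise_ne {ι : Type*} {s : Finset ι} (hs : s.Nonempty) {f : ι → F}
    (hf : ∀ i ∈ s, f i ≠ 0) (hv : ∀ i ∈ s, ∀ j ∈ s, i ≠ j → w.v (f i) ≠ w.v (f j)) :
    ∑ i ∈ s, f i ≠ 0 ∧
      ∃ i ∈ s, w.v (∑ i ∈ s, f i) = w.v (f i) ∧ ∀ j ∈ s, w.v (f i) ≤ w.v (f j) := by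
  classical
  induction s using Finset.cons_induction with
  | empty => simp at hs
  | cons a s ha ih =>
    rw [Finset.sum_cons]
    have hfa := hf a (Finset.mem_cons_self a s)
    rcases s.eq_empty_or_nonempty with rfl | hs'
    · simpa using hfa
    obtain ⟨hsum, i, hi, hvi, hmin⟩ :=
      ih hs' (fun i hi ↦ hf i (Finset.mem_cons_of_mem hi))
        (fun i hi j hj ↦ hv i (Finset.mem_cons_of_mem hi) j (Finset.mem_cons_of_mem hj))
    have hne : w.v (f a) ≠ w.v (∑ i ∈ s, f i) := by
      rw [hvi]
      exact hv a (Finset.mem_cons_self a s) i (Finset.mem_cons_of_mem hi)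
        (by rintro rfl; exact ha hi)
    obtain ⟨hsum', hv'⟩ := v_add_of_ne w hfa hsum hne
    refine ⟨hsum', ?_⟩
    rcases le_total (w.v (f a)) (w.v (f i)) with hle | hle
    · refine ⟨a, Finset.mem_cons_self a s, by rw [hv', hvi, min_eq_left hle], ?_⟩
      intro j hj
      rcases Finset.mem_cons.mp hj with rfl | hj
      · exact le_rfl
      · exact hle.trans (hmin j hj)
    · refine ⟨i, Finset.mem_cons_of_mem hi, by rw [hv', hvi, min_eq_right hle], ?_⟩
      intro j hj
      rcases Finset.mem_cons.mp hj with rfl | hj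
      · exact hle
      · exact hmin j hj

end Valuation

section Extension

variable {K L : Type} [Field K] [Field L] [Algebra K L]
  {wK : LocalFieldStruct K} {wL : LocalFieldStruct L} {e : ℕ}

theorem IsRamificationIndex.v_algebraMap_mul (he : wK.IsRamificationIndex wL e) {c : K} {y : L}
    (hc : c ≠ 0) (hy : y ≠ 0) : wL.v (algebraMap K L c * y) = e * wK.v c + wL.v y := by
  rw [wL.v_mul _ _ (by simpa using hc) hy, he.2 c hc]

theorem IsRamificationIndex.exists_v_algebraMap_mul_eq (he : wK.IsRamificationIndex wL e)
    {y : L} (hy : y ≠ 0) {t : ℤ} (ht : wL.v y ≡ t [ZMOD e]) :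
    ∃ c : K, c ≠ 0 ∧ wL.v (algebraMap K L c * y) = t := by
  obtain ⟨k, hk⟩ := ht.dvd
  obtain ⟨c, hc, hck⟩ := wK.v_surj k
  exact ⟨c, hc, by rw [he.v_algebraMap_mul hc hy, hck]; linarith⟩

theorem IsRamificationIndex.exists_ker_v_modEq (he : wK.IsRamificationIndex wL e)
    (T : L →ₗ[K] K) {c c' : ℤ} (hcc' : ¬ c ≡ c' [ZMOD e]) :
    ∃ y : L, y ≠ 0 ∧ T y = 0 ∧ (wL.v y ≡ c [ZMOD e] ∨ wL.v y ≡ c' [ZMOD e]) := by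
  obtain ⟨x, hx0, hx⟩ := wL.v_surj c
  obtain ⟨x', hx'0, hx'⟩ := wL.v_surj c'
  by_cases hTx : T x = 0
  · exact ⟨x, hx0, hTx, .inl (by rw [hx])⟩
  by_cases hTx' : T x' = 0
  · exact ⟨x', hx'0, hTx', .inr (by rw [hx'])⟩
  have ht : T x' / T x ≠ 0 := div_ne_zero hTx' hTx
  have htx : algebraMap K L (T x' / T x) * x ≠ 0 := mul_ne_zero ((map_ne_zero _).mpr ht) hx0
  have hv := he.v_algebraMap_mul ht hx0
  have hne : wL.v x' ≠ wL.v (algebraMap K L (T x' / T x) * x) := by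
    rw [hv, hx, hx']
    intro h
    exact hcc' (Int.modEq_iff_dvd.mpr ⟨wK.v (T x' / T x), by linarith⟩)
  obtain ⟨hz0, hz⟩ := v_sub_of_ne wL hx'0 htx hne
  refine ⟨_, hz0, ?_, ?_⟩
  · rw [map_sub, ← Algebra.smul_def, map_smul, smul_eq_mul, div_mul_cancel₀ _ hTx, sub_self]
  · rw [hz, hv, hx, hx']
    rcases min_choice c' (e * wK.v (T x' / T x) + c) with h | h <;> rw [h]
    · exact .inr rfl
    · exact .inl (Int.modEq_iff_dvd.mpr ⟨-wK.v (T x' / T x), by ring⟩)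

theorem IsRamificationIndex.v_sum_smul_pow (he : wK.IsRamificationIndex wL e) {π : L}
    (hπ0 : π ≠ 0) (hπ : wL.v π = 1) {s : Finset (Fin e)} (hs : s.Nonempty) {a : Fin e → K}
    (ha : ∀ i ∈ s, a i ≠ 0) :
    ∑ i ∈ s, a i • π ^ (i : ℕ) ≠ 0 ∧ ∃ i ∈ s,
      wL.v (∑ i ∈ s, a i • π ^ (i : ℕ)) = e * wK.v (a i) + i ∧
      ∀ j ∈ s, e * wK.v (a i) + i ≤ e * wK.v (a j) + j := by
  have hterm (i : Fin e) (hi : i ∈ s) :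
      a i • π ^ (i : ℕ) ≠ 0 ∧ wL.v (a i • π ^ (i : ℕ)) = e * wK.v (a i) + i := by
    rw [Algebra.smul_def, he.v_algebraMap_mul (ha i hi) (pow_ne_zero _ hπ0), v_pow wL hπ0, hπ,
      mul_one]
    exact ⟨mul_ne_zero ((map_ne_zero _).mpr (ha i hi)) (pow_ne_zero _ hπ0), rfl⟩
  obtain ⟨hsum, i, hi, hvi, hmin⟩ := v_sum_of_pairwise_ne wL hs (fun i hi ↦ (hterm i hi).1)
    (fun i hi j hj hij h ↦ hij (Fin.eq_of_intCast_modEq (Int.modEq_iff_dvd.mpr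
      ⟨wK.v (a i) - wK.v (a j), by linarith [(hterm i hi).2, (hterm j hj).2]⟩)))
  refine ⟨hsum, i, hi, hvi.trans (hterm i hi).2, fun j hj ↦ ?_⟩
  rw [← (hterm i hi).2, ← (hterm j hj).2]
  exact hmin j hj

theorem IsRamificationIndex.linearIndependent_pow (he : wK.IsRamificationIndex wL e) {π : L}
    (hπ0 : π ≠ 0) (hπ : wL.v π = 1) : LinearIndependent K (fun i : Fin e ↦ π ^ (i : ℕ)) := by
  classical
  rw [Fintype.linearIndependent_iff]
  intro a h
  by_contra! ha
  have hs : (Finset.univ.filter (a · ≠ 0)).Nonempty := by simpa [Finset.filter_nonempty_iff]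
  refine (he.v_sum_smul_pow hπ0 hπ hs (fun i hi ↦ (Finset.mem_filter.mp hi).2)).1 ?_
  rwa [Finset.sum_filter_of_ne fun i _ hi ↦ left_ne_zero_of_smul hi]

/-- The residue field does not grow: the powers `π ^ i`, `i < e`, of a uniformizer form a `K`-basis,
and only the constant term of the expansion of `ρ` has valuation `0`. -/
theorem IsRamificationIndex.exists_v_sub_algebraMap_pos [FiniteDimensional K L]
    (he : wK.IsRamificationIndex wL e) (htot : e = Module.finrank K L) {ρ : L} (hρ0 : ρ ≠ 0)
    (hρ : wL.v ρ = 0) : ∃ c : K, ρ = algebraMap K L c ∨ 0 < wL.v (ρ - algebraMap K L c) := by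
  classical
  obtain ⟨π, hπ0, hπ⟩ := wL.v_surj 1
  have hspan := (he.linearIndependent_pow hπ0 hπ).span_eq_top_of_card_eq_finrank'
    (by rw [Fintype.card_fin, htot])
  obtain ⟨a, ha⟩ := (Submodule.mem_span_range_iff_exists_fun K).mp (hspan ▸ Submodule.mem_top)
  set S := Finset.univ.filter (a · ≠ 0)
  have haS : ∀ i ∈ S, a i ≠ 0 := fun i hi ↦ (Finset.mem_filter.mp hi).2
  have hρS : ∑ i ∈ S, a i • π ^ (i : ℕ) = ρ := by
    rwa [Finset.sum_filter_of_ne fun i _ hi ↦ left_ne_zero_of_smul hi]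
  have hS : S.Nonempty := by
    by_contra! h
    rw [h, Finset.sum_empty] at hρS
    exact hρ0 hρS.symm
  obtain ⟨-, i₀, hi₀S, hv₀, hmin⟩ := he.v_sum_smul_pow hπ0 hπ hS haS
  rw [hρS, hρ] at hv₀
  have hi₀ : (i₀ : ℕ) = 0 := congrArg Fin.val (Fin.eq_of_intCast_modEq (j := ⟨0, he.1⟩)
    (Int.modEq_iff_dvd.mpr ⟨wK.v (a i₀), by simp only [Nat.cast_zero]; linarith⟩))
  refine ⟨a i₀, ?_⟩
  have hsub : ∑ i ∈ S.erase i₀, a i • π ^ (i : ℕ) = ρ - algebraMap K L (a i₀) := by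
    rw [Finset.sum_erase_eq_sub hi₀S, hρS, hi₀, pow_zero, Algebra.algebraMap_eq_smul_one]
  rcases (S.erase i₀).eq_empty_or_nonempty with h | h
  · rw [h, Finset.sum_empty] at hsub
    exact .inl (sub_eq_zero.mp hsub.symm)
  · obtain ⟨-, i₁, hi₁, hv₁, -⟩ :=
      he.v_sum_smul_pow hπ0 hπ h fun i hi ↦ haS i (Finset.mem_of_mem_erase hi)
    refine .inr ?_
    rw [← hsub, hv₁]
    have hle := hmin i₁ (Finset.mem_of_mem_erase hi₁)
    have hne : (e : ℤ) * wK.v (a i₁) + i₁ ≠ 0 := fun h0 ↦ Finset.ne_of_mem_erase hi₁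
      (Fin.eq_of_intCast_modEq (Int.modEq_iff_dvd.mpr
        ⟨wK.v (a i₁), by rw [hi₀, Nat.cast_zero]; linarith⟩))
    omega

theorem IsDifferentVal.trace_ne_zero [FiniteDimensional K L] (he : wK.IsRamificationIndex wL e)
    (htot : e = Module.finrank K L) {d : ℤ} (hd : wK.IsDifferentVal wL d) {y : L} (hy : y ≠ 0)
    (hyv : wL.v y ≡ -d - 1 [ZMOD e]) : Algebra.trace K L y ≠ 0 := by
  intro htr
  have hint : ∀ z : L, (z ≠ 0 → -d ≤ wL.v z) → wK.Integral (Algebra.trace K L z) :=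
    (hd (-d)).mpr le_rfl
  obtain ⟨x, hxv, hx⟩ : ∃ x : L, (x ≠ 0 → -d - 1 ≤ wL.v x) ∧
      ¬ wK.Integral (Algebra.trace K L x) := by
    by_contra! h
    have := (hd (-d - 1)).mp h
    omega
  have hx0 : x ≠ 0 := by
    rintro rfl
    exact hx (.inl (map_zero _))
  have hxv' : wL.v x = -d - 1 := by
    by_contra h
    exact hx (hint x fun _ ↦ by have := hxv hx0; omega)
  obtain ⟨c, hc, hcy⟩ := he.exists_v_algebraMap_mul_eq hy hyv
  set y' := algebraMap K L c * y
  have hy'0 : y' ≠ 0 := mul_ne_zero ((map_ne_zero _).mpr hc) hy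
  have hρ0 : x * y'⁻¹ ≠ 0 := mul_ne_zero hx0 (inv_ne_zero hy'0)
  have hρ : wL.v (x * y'⁻¹) = 0 := by
    rw [wL.v_mul _ _ hx0 (inv_ne_zero hy'0), v_inv wL hy'0, hxv', hcy, add_neg_cancel]
  obtain ⟨c', hc'⟩ := he.exists_v_sub_algebraMap_pos htot hρ0 hρ
  have hdiff : x - algebraMap K L c' * y' = (x * y'⁻¹ - algebraMap K L c') * y' := by
    field_simp
  have htrx : Algebra.trace K L (x - algebraMap K L c' * y') = Algebra.trace K L x := by
    simp only [y', ← Algebra.smul_def, map_sub, map_smul, htr, smul_zero, sub_zero]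
  apply hx
  rw [← htrx]
  refine hint _ fun hne ↦ ?_
  rw [hdiff] at hne ⊢
  rcases hc' with h | h
  · rw [h, sub_self, zero_mul] at hne
    exact absurd rfl hne
  · rw [wL.v_mul _ _ (left_ne_zero_of_mul hne) hy'0, hcy]
    omega

end Extension

end LocalFieldStruct

section Galois

variable {K L : Type} [Field K] [Field L] [Algebra K L]

/-- In a Kummer extension the nonzero ones are exactly the radicals, the `y` with `y ^ m ∈ K`. -/
def IsGalEigenvector (K : Type) [Field K] {L : Type} [Field L] [Algebra K L] (y : L) : Prop :=
  ∀ σ : L ≃ₐ[K] L, ∃ c : K, σ y = c • y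

theorem not_isNormalElement_of_forall_map_eq_zero {T : L →ₗ[K] K} (hT : T ≠ 0) {x : L}
    (hx : ∀ σ : L ≃ₐ[K] L, T (σ x) = 0) : ¬ IsNormalElement K x := by
  rintro ⟨-, hspan⟩
  refine hT (LinearMap.ker_eq_top.mp (top_le_iff.mp (hspan ▸ ?_)))
  exact Submodule.span_le.mpr (Set.range_subset_iff.mpr hx)

theorem AlgEquiv.apply_mem_span_range_apply (x : L) (σ : L ≃ₐ[K] L) {v : L}
    (hv : v ∈ Submodule.span K (Set.range fun τ : L ≃ₐ[K] L => τ x)) :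
    σ v ∈ Submodule.span K (Set.range fun τ : L ≃ₐ[K] L => τ x) := by
  induction hv using Submodule.span_induction with
  | mem _ h =>
    obtain ⟨τ, rfl⟩ := h
    exact Submodule.subset_span ⟨σ * τ, rfl⟩
  | zero => simp
  | add _ _ _ _ h h' => simpa using Submodule.add_mem _ h h'
  | smul c _ _ h => simpa using Submodule.smul_mem _ c h

theorem IsGalEigenvector.of_pow_eq_algebraMap {m : ℕ} (hm : 0 < m) {ζ : K}
    (hζ : IsPrimitiveRoot ζ m) {y : L} (hy0 : y ≠ 0) {a : K} (hya : y ^ m = algebraMap K L a) :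
    IsGalEigenvector K y := by
  intro σ
  have : NeZero m := ⟨hm.ne'⟩
  have h1 : (σ y / y) ^ m = 1 := by
    rw [div_pow, ← map_pow, hya, AlgEquiv.commutes, ← hya, div_self (pow_ne_zero m hy0)]
  obtain ⟨i, -, hi⟩ := (hζ.map_of_injective (algebraMap K L).injective).eq_pow_of_pow_eq_one h1
  exact ⟨ζ ^ i, by rw [Algebra.smul_def, map_pow, hi, div_mul_cancel₀ _ hy0]⟩

variable [FiniteDimensional K L]

theorem isNormalElement_iff_span_eq_top [IsGalois K L] {x : L} :
    IsNormalElement K x ↔ Submodule.span K (Set.range fun σ : L ≃ₐ[K] L => σ x) = ⊤ :=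
  ⟨And.right, fun h ↦ ⟨linearIndependent_of_top_le_span_of_card_eq_finrank h.ge
    (by rw [← Nat.card_eq_fintype_card, IsGalois.card_aut_eq_finrank]), h⟩⟩

theorem exists_isGalEigenvector_trace_mul_eq_zero
    (habelian : ∀ σ τ : L ≃ₐ[K] L, σ * τ = τ * σ) {m : ℕ} (hm : 0 < m) {ζ : K}
    (hζ : IsPrimitiveRoot ζ m) (hexp : ∀ σ : L ≃ₐ[K] L, σ ^ m = 1) {x : L}
    (hx : Submodule.span K (Set.range fun σ : L ≃ₐ[K] L => σ x) ≠ ⊤) :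
    ∃ y : L, y ≠ 0 ∧ IsGalEigenvector K y ∧ Algebra.trace K L (x * y) = 0 := by
  set V := Submodule.span K (Set.range fun σ : L ≃ₐ[K] L => σ x)
  set W := (Algebra.traceForm K L).orthogonal V
  have hmemW : ∀ y, y ∈ W ↔ ∀ v ∈ V, Algebra.trace K L (v * y) = 0 := fun y ↦
    LinearMap.BilinForm.mem_orthogonal_iff
  have hW : W ≠ ⊥ := by
    intro hW
    have := LinearMap.BilinForm.finrank_add_finrank_orthogonal' (B := Algebra.traceForm K L) V
    have := Submodule.finrank_lt hx
    simp only [W] at hW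
    rw [hW, finrank_bot] at *
    omega
  have hWσ : ∀ σ : L ≃ₐ[K] L, ∀ y ∈ W, σ y ∈ W := fun σ y hy ↦ (hmemW _).mpr fun v hv ↦ by
    rw [← σ.apply_symm_apply v, ← map_mul, Algebra.trace_eq_of_algEquiv]
    exact (hmemW y).mp hy _ (σ.symm.apply_mem_span_range_apply x hv)
  obtain ⟨y, hyW, hy0, hy⟩ := Module.End.exists_common_eigenvector hm hζ
    (f := AlgEquiv.toLinearMapHom K L)
    (fun σ τ ↦ by simp only [Commute, SemiconjBy, ← map_mul, habelian σ τ])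
    (fun σ ↦ by rw [← map_pow, hexp, map_one]) Finset.univ hW hWσ
  exact ⟨y, hy0, fun σ ↦ hy σ (Finset.mem_univ σ),
    (hmemW y).mp hyW x (Submodule.subset_span ⟨1, rfl⟩)⟩

theorem IsGalEigenvector.exists_pow_eq_algebraMap [IsGalois K L] {m : ℕ}
    (hexp : ∀ σ : L ≃ₐ[K] L, σ ^ m = 1) {y : L} (hy0 : y ≠ 0) (hy : IsGalEigenvector K y) :
    ∃ a : K, y ^ m = algebraMap K L a := by
  have hfix (σ : L ≃ₐ[K] L) : σ (y ^ m) = y ^ m := by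
    obtain ⟨c, hc⟩ := hy σ
    have hpow (n : ℕ) : (σ ^ n) y = c ^ n • y := by
      induction n with
      | zero => simp
      | succ n ih => rw [pow_succ, AlgEquiv.mul_apply, hc, map_smul, ih, smul_smul, pow_succ']
    have hcm : c ^ m = 1 := by
      have h := hpow m
      rw [hexp, AlgEquiv.one_apply] at h
      exact smul_left_injective K hy0 (h.symm.trans (one_smul K y).symm)
    rw [map_pow, hc, smul_pow, hcm, one_smul]
  obtain ⟨a, ha⟩ := (IsGalois.mem_range_algebraMap_iff_fixed (y ^ m)).mpr hfix
  exact ⟨a, ha.symm⟩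

end Galois

section Criterion

open LocalFieldStruct

variable {K L : Type} [Field K] [Field L] [Algebra K L]
  {wK : LocalFieldStruct K} {wL : LocalFieldStruct L} {e : ℕ}

theorem LocalFieldStruct.IsRamificationIndex.dvd_v_iff_of_pow_eq_algebraMap
    (he : wK.IsRamificationIndex wL e) {m : ℕ} (hm : m ≠ 0) {x : L} (hx0 : x ≠ 0) {a : K}
    (ha0 : a ≠ 0) (hxa : x ^ m = algebraMap K L a) : (e : ℤ) ∣ wL.v x ↔ (m : ℤ) ∣ wK.v a := by
  have h : (m : ℤ) * wL.v x = e * wK.v a := by rw [← v_pow wL hx0, hxa, he.2 a ha0]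
  have he0 : (e : ℤ) ≠ 0 := by exact_mod_cast he.1.ne'
  have hm0 : (m : ℤ) ≠ 0 := by exact_mod_cast hm
  constructor
  · rintro ⟨k, hk⟩
    exact ⟨k, mul_left_cancel₀ he0 (by rw [← h, hk]; ring)⟩
  · rintro ⟨k, hk⟩
    exact ⟨k, mul_left_cancel₀ hm0 (by rw [h, hk]; ring)⟩

theorem VC.dvd_v_of_isGalEigenvector [FiniteDimensional K L] [IsGalois K L] {d : ℤ}
    (hvc : VC K wL e d) (he : wK.IsRamificationIndex wL e) {x : L} (hx0 : x ≠ 0)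
    (hx : IsGalEigenvector K x) : (e : ℤ) ∣ wL.v x := by
  by_contra hdvd
  have htr : Algebra.trace K L ≠ 0 := Algebra.trace_ne_zero K L
  obtain ⟨y, hy0, hTy, hyv | hyv⟩ := he.exists_ker_v_modEq (Algebra.trace K L)
    (c := -d - 1) (c' := -d - 1 + wL.v x)
    (fun h ↦ hdvd (by simpa using Int.ModEq.dvd h))
  · refine not_isNormalElement_of_forall_map_eq_zero htr (fun σ ↦ ?_) (hvc y hy0 hyv)
    rwa [Algebra.trace_eq_of_algEquiv]
  -- `z ↦ Tr (x * z)` kills every conjugate of `x⁻¹ * y`, because `σ⁻¹ x ∈ K x`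
  set T := (Algebra.trace K L).comp (LinearMap.mulLeft K x)
  have hT : T ≠ 0 := fun h ↦ htr (LinearMap.ext fun z ↦ by
    simpa [T, hx0] using LinearMap.congr_fun h (x⁻¹ * z))
  have hz0 : x⁻¹ * y ≠ 0 := mul_ne_zero (inv_ne_zero hx0) hy0
  refine not_isNormalElement_of_forall_map_eq_zero hT (fun σ ↦ ?_) (hvc _ hz0 ?_)
  · obtain ⟨c, hc⟩ := hx σ.symm
    have : x * σ (x⁻¹ * y) = σ (σ.symm x * (x⁻¹ * y)) := by
      rw [map_mul σ (σ.symm x), σ.apply_symm_apply]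
    simp only [T, LinearMap.comp_apply, LinearMap.mulLeft_apply]
    rw [this, Algebra.trace_eq_of_algEquiv, hc, smul_mul_assoc, ← mul_assoc,
      mul_inv_cancel₀ hx0, one_mul, map_smul, hTy, smul_zero]
  · rw [wL.v_mul _ _ (inv_ne_zero hx0) hy0, v_inv wL hx0, neg_add_eq_sub]
    simpa using hyv.sub_right (wL.v x)

theorem vc_iff_forall_isGalEigenvector_dvd_v [FiniteDimensional K L] [IsGalois K L]
    (he : wK.IsRamificationIndex wL e) (htot : e = Module.finrank K L) {d : ℤ}
    (hd : wK.IsDifferentVal wL d) (habelian : ∀ σ τ : L ≃ₐ[K] L, σ * τ = τ * σ) {m : ℕ}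
    (hm : 0 < m) {ζ : K} (hζ : IsPrimitiveRoot ζ m) (hexp : ∀ σ : L ≃ₐ[K] L, σ ^ m = 1) :
    VC K wL e d ↔ ∀ y : L, y ≠ 0 → IsGalEigenvector K y → (e : ℤ) ∣ wL.v y := by
  refine ⟨fun hvc y hy0 hy ↦ hvc.dvd_v_of_isGalEigenvector he hy0 hy, fun h x hx0 hxv ↦ ?_⟩
  rw [isNormalElement_iff_span_eq_top]
  by_contra hx
  obtain ⟨y, hy0, hy, htr⟩ := exists_isGalEigenvector_trace_mul_eq_zero habelian hm hζ hexp hx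
  obtain ⟨k, hk⟩ := h y hy0 hy
  refine hd.trace_ne_zero he htot (mul_ne_zero hx0 hy0) ?_ htr
  rw [wL.v_mul _ _ hx0 hy0, hk]
  exact (hxv.add_right _).trans (Int.modEq_iff_dvd.mpr ⟨-k, by ring⟩)

end Criterion

open LocalFieldStruct in
theorem statement12_general {K L : Type} [Field K] [Field L] [Algebra K L]
    [FiniteDimensional K L] [IsGalois K L]
    (wK : LocalFieldStruct K) (wL : LocalFieldStruct L)
    -- `L/K` is a Kummer extension:
    (habelian : ∀ σ τ : L ≃ₐ[K] L, σ * τ = τ * σ)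
    (hkummer : ∃ ζ : K, IsPrimitiveRoot ζ (Monoid.exponent (L ≃ₐ[K] L)))
    -- `L/K` is totally ramified of degree a power of `p`:
    (e : ℕ) (he : IsRamificationIndex wK wL e)
    (htot : e = Module.finrank K L)
    (d : ℤ) (hd : IsDifferentVal wK wL d) :
    VC K wL e d ↔
      ∀ a : K, a ≠ 0 →
        (∃ x : L, x ^ Monoid.exponent (L ≃ₐ[K] L) = algebraMap K L a) →
        (Monoid.exponent (L ≃ₐ[K] L) : ℤ) ∣ wK.v a := by
  obtain ⟨ζ, hζ⟩ := hkummer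
  have hm : 0 < Monoid.exponent (L ≃ₐ[K] L) := Nat.pos_of_ne_zero Monoid.exponent_ne_zero_of_finite
  rw [vc_iff_forall_isGalEigenvector_dvd_v he htot hd habelian hm hζ Monoid.pow_exponent_eq_one]
  constructor
  · rintro h a ha0 ⟨x, hxa⟩
    have hx0 : x ≠ 0 := by
      rintro rfl
      rw [zero_pow hm.ne', eq_comm, map_eq_zero] at hxa
      exact ha0 hxa
    exact (he.dvd_v_iff_of_pow_eq_algebraMap hm.ne' hx0 ha0 hxa).mp
      (h x hx0 (.of_pow_eq_algebraMap hm hζ hx0 hxa))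
  · intro h y hy0 hy
    obtain ⟨a, hya⟩ := hy.exists_pow_eq_algebraMap Monoid.pow_exponent_eq_one hy0
    have ha0 : a ≠ 0 := by
      rintro rfl
      rw [map_zero] at hya
      exact pow_ne_zero _ hy0 hya
    exact (he.dvd_v_iff_of_pow_eq_algebraMap hm.ne' hy0 ha0 hya).mpr (h a ha0 ⟨y, hya⟩)

open LocalFieldStruct in
/-- **Theorem 1.** Let `L/K` be a totally ramified Kummer extension of local
fields whose degree is a power of the residue characteristic `p`.  Then
`VC(L/K)` holds if and only if `L` is a unit root Kummer extension of `K`,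
i.e. `v_K(W) ⊆ mℤ` where `m` is the exponent of `Gal(L/K)` and
`W = L*ᵐ ∩ K*`. -/
theorem statement12 {K L : Type} [Field K] [Field L] [Algebra K L]
    [FiniteDimensional K L] [IsGalois K L]
    (wK : LocalFieldStruct K) (wL : LocalFieldStruct L)
    (p : ℕ) (hp : wK.ResidueCharP p)
    -- `L/K` is a Kummer extension:
    (habelian : ∀ σ τ : L ≃ₐ[K] L, σ * τ = τ * σ)
    (hkummer : ∃ ζ : K, IsPrimitiveRoot ζ (Monoid.exponent (L ≃ₐ[K] L)))
    -- `L/K` is totally ramified of degree a power of `p`: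
    (e : ℕ) (he : IsRamificationIndex wK wL e)
    (htot : e = Module.finrank K L)
    (hdeg : ∃ k : ℕ, Module.finrank K L = p ^ k)
    (d : ℤ) (hd : IsDifferentVal wK wL d) :
    VC K wL e d ↔
      ∀ a : K, a ≠ 0 →
        (∃ x : L, x ^ Monoid.exponent (L ≃ₐ[K] L) = algebraMap K L a) →
        (Monoid.exponent (L ≃ₐ[K] L) : ℤ) ∣ wK.v a :=
  statement12_general wK wL habelian hkummer e he htot d hd
end

section
/- Let K be a local field of mixed characteristic (0, p), let n be a power of p, and let r | n be the number of n-th roots of unity in K*. Assume p divides r, and if p = 2 and 8 | n assume r ≠ 2. Then for every root of unity ζ ∈ K* of order exactly r, the polynomial X^{n/r} − ζ is irreducible in K[X]; consequently X^n − 1 factors over K as (X^{n/p} − 1) · ∏_ζ (X^{n/r} − ζ), where ζ ranges over the elements of K* of multiplicative order exactly r, and each factor X^{n/r} − ζ is irreducible. -/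
/-!
The `n`-th roots of unity of `K` form a cyclic group of order `r = p^(s+1)`, so every `n`-th root
of unity is an `r`-th one. Hence an element `ζ` of order `r` is not a `p`-th power: a `p`-th root
of `ζ` would be an `n`-th root of unity of order `p * r`. Capelli's criterion then makes
`X^(n/r) - ζ` irreducible; for `p = 2` it needs `√-1 ∈ K`, which is a power of `ζ` once `4 ∣ r`,
while for `r = 2` the hypothesis forces `n/r ≤ 2`. Substituting `X ↦ X^(n/r)` into
`X^r - 1 = ∏ (X - ξ)` and sorting the `r`-th roots `ξ` by their order gives the factorization.
-/

open Polynomial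

section RootsOfUnity

variable {M : Type*} [CommMonoid M]

theorem pow_natCard_rootsOfUnity_eq_one {n : ℕ} (hn : n ≠ 0) {x : M} (hx : x ^ n = 1) :
    x ^ Nat.card (rootsOfUnity n M) = 1 := by
  have := congrArg (fun u : rootsOfUnity n M => ((u : Mˣ) : M))
    (pow_card_eq_one' (x := ⟨(IsUnit.of_pow_eq_one hx hn).unit, by ext; simpa using hx⟩))
  simpa using this

theorem exists_isPrimitiveRoot_natCard_rootsOfUnity {R : Type*} [CommRing R] [IsDomain R]
    (n : ℕ) [NeZero n] :
    ∃ ζ : R, IsPrimitiveRoot ζ (Nat.card (rootsOfUnity n R)) := by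
  obtain ⟨g, hg⟩ := IsCyclic.exists_ofOrder_eq_natCard (α := rootsOfUnity n R)
  refine ⟨((g : Rˣ) : R), IsPrimitiveRoot.iff_orderOf.mpr ?_⟩
  rw [orderOf_units, Subgroup.orderOf_coe, hg]

theorem pow_ne_of_orderOf_eq_mul {G : Type*} [Monoid G] {ζ b : G} {p q : ℕ}
    (hζ : orderOf ζ = p * q) (hp : 1 < p) (hq : 0 < q) (hb : b ^ (p * q) = 1) : b ^ p ≠ ζ := by
  rintro rfl
  have := Nat.le_of_dvd hq (hζ ▸ orderOf_dvd_of_pow_eq_one (by rwa [← pow_mul]))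
  nlinarith

end RootsOfUnity

section Kummer

variable {K : Type*} [Field K]

open IntermediateField in
theorem X_pow_two_pow_sub_C_irreducible {i : K} (hi : i ^ 2 = -1) {a : K}
    (ha : ∀ b : K, b ^ 2 ≠ a) (m : ℕ) : Irreducible (X ^ 2 ^ m - C a) := by
  induction m generalizing K with
  | zero => simpa using irreducible_X_sub_C a
  | succ m ih =>
    rw [pow_succ]
    refine X_pow_mul_sub_C_irreducible (X_pow_sub_C_irreducible_of_prime Nat.prime_two ha) ?_
    intro E _ _ x hx
    have hint : IsIntegral K x := not_not.mp fun h ↦ by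
      simpa only [degree_zero, degree_X_pow_sub_C Nat.prime_two.pos,
        WithBot.natCast_ne_bot] using congr_arg degree (hx.symm.trans (dif_neg h))
    refine ih (i := algebraMap K K⟮x⟯ i) (by rw [← map_pow, hi, map_neg, map_one]) fun b hb ↦ ?_
    -- a square root `b` of `x` has `N(b)^2 = -a`, so `i * N(b)` would be a square root of `a`
    have hnorm : Algebra.norm K b ^ 2 = -a := by
      rw [← map_pow, hb, ← adjoin.powerBasis_gen hint,
        Algebra.PowerBasis.norm_gen_eq_coeff_zero_minpoly]
      simp [minpoly_gen, hx]
    exact ha (i * Algebra.norm K b) (by rw [mul_pow, hi, hnorm, neg_one_mul, neg_neg])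

theorem X_pow_sub_C_irreducible_of_isPrimitiveRoot {p s d : ℕ} (hp : p.Prime) {ζ : K}
    (hζ : IsPrimitiveRoot ζ (p ^ (s + 1)))
    (hroots : ∀ x : K, x ^ p ^ (s + 1 + d) = 1 → x ^ p ^ (s + 1) = 1)
    (h2 : p = 2 → s = 0 → d ≤ 1) : Irreducible (X ^ p ^ d - C ζ) := by
  obtain _ | e := d
  · simpa using irreducible_X_sub_C ζ
  have ha : ∀ b : K, b ^ p ≠ ζ := fun b hb ↦ by
    refine pow_ne_of_orderOf_eq_mul (by rw [← hζ.eq_orderOf, pow_succ']) hp.one_lt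
      (pow_pos hp.pos s) ?_ hb
    rw [← pow_succ']
    apply hroots
    rw [show s + 1 + (e + 1) = 1 + (s + 1) + e by ring, pow_add, pow_mul, pow_add, pow_mul,
      pow_one, hb, hζ.pow_eq_one, one_pow]
  rcases eq_or_ne p 2 with rfl | hp2
  · obtain _ | t := s
    · obtain rfl : e = 0 := by have := h2 rfl rfl; omega
      simpa using X_pow_sub_C_irreducible_of_prime Nat.prime_two ha
    · have hζ2 := hζ.pow_of_dvd (p := 2 ^ (t + 1)) (by positivity) (pow_dvd_pow 2 (by omega))
      rw [pow_succ 2 (t + 1), Nat.mul_div_cancel_left _ (by positivity)] at hζ2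
      have hi : (ζ ^ 2 ^ t) ^ 2 = -1 := by rw [← pow_mul, ← pow_succ, hζ2.eq_neg_one_of_two_right]
      exact X_pow_two_pow_sub_C_irreducible hi ha _
  · exact X_pow_sub_C_irreducible_of_prime_pow hp hp2 _ ha

end Kummer

section Factorization

variable {R : Type*} [CommRing R] [IsDomain R]

theorem X_pow_mul_sub_one_eq_prod {ζ : R} {j : ℕ} (hj : 0 < j) (hζ : IsPrimitiveRoot ζ j)
    (m : ℕ) : (X ^ (m * j) - 1 : R[X]) = ∏ ξ ∈ nthRootsFinset j (1 : R), (X ^ m - C ξ) := by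
  simpa [map_prod, pow_mul] using congrArg (expand R m) (X_pow_sub_one_eq_prod hj hζ)

theorem filter_orderOf_ne_nthRootsFinset_prime_pow {p : ℕ} (hp : p.Prime) (s : ℕ) :
    {x ∈ nthRootsFinset (p ^ (s + 1)) (1 : R) | orderOf x ≠ p ^ (s + 1)} =
      nthRootsFinset (p ^ s) (1 : R) := by
  have : Fact p.Prime := ⟨hp⟩
  ext x
  simp only [Finset.mem_filter, mem_nthRootsFinset (pow_pos hp.pos _)]
  constructor
  · rintro ⟨hx, hord⟩
    by_contra hxs
    exact hord (orderOf_eq_prime_pow hxs hx)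
  · intro hx
    refine ⟨by rw [pow_succ, pow_mul, hx, one_pow], fun hord ↦ ?_⟩
    exact pow_ne_one_of_lt_orderOf (pow_ne_zero _ hp.ne_zero)
      (hord ▸ Nat.pow_lt_pow_succ hp.one_lt) hx

theorem X_pow_sub_one_eq_mul_prod_orderOf_eq {p s : ℕ} (hp : p.Prime) {ζ : R}
    (hζ : IsPrimitiveRoot ζ (p ^ (s + 1))) (m : ℕ) :
    (X ^ (m * p ^ (s + 1)) - 1 : R[X]) =
      (X ^ (m * p ^ s) - 1) *
        ∏ ξ ∈ nthRootsFinset (p ^ (s + 1)) (1 : R) with orderOf ξ = p ^ (s + 1), (X ^ m - C ξ) := by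
  have hζ' : IsPrimitiveRoot (ζ ^ p) (p ^ s) := by
    simpa [pow_succ, hp.ne_zero] using hζ.pow_of_dvd hp.ne_zero (dvd_pow_self p s.succ_ne_zero)
  rw [X_pow_mul_sub_one_eq_prod (pow_pos hp.pos _) hζ,
    X_pow_mul_sub_one_eq_prod (pow_pos hp.pos _) hζ',
    ← Finset.prod_filter_mul_prod_filter_not _ (orderOf · = p ^ (s + 1)),
    filter_orderOf_ne_nthRootsFinset_prime_pow hp, mul_comm]

end Factorization

open LocalFieldStruct Polynomial in
/-- Let `K` be a local field of mixed characteristic `(0, p)`, let `n` be a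
power of `p`, and let `r ∣ n` be the number of `n`-th roots of unity in `K*`.
Assume `p ∣ r`, and if `p = 2` and `8 ∣ n` assume `r ≠ 2`.  Then for every
`ζ ∈ K*` of multiplicative order exactly `r`, the polynomial `X^{n/r} - ζ` is
irreducible over `K`; consequently
`X^n - 1 = (X^{n/p} - 1) · ∏_{ζ of order r} (X^{n/r} - ζ)`
is the factorization of `X^n - 1` into irreducible factors (times `X^{n/p}-1`). -/
theorem statement19 {K : Type} [Field K]
    (wK : LocalFieldStruct K)
    (p : ℕ) (hmixed : wK.MixedChar p)
    (n : ℕ) (hn : ∃ k : ℕ, n = p ^ k)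
    (r : ℕ) (hrn : r ∣ n) (hr : Nat.card {ζ : Kˣ // ζ ^ n = 1} = r)
    (hpr : p ∣ r) (h2 : p = 2 → 8 ∣ n → r ≠ 2) :
    (∀ ζ : K, orderOf ζ = r → Irreducible (X ^ (n / r) - C ζ)) ∧
      (X ^ n - 1 : Polynomial K) =
        (X ^ (n / p) - 1) *
          ∏ ζ ∈ Finset.filter (fun ζ : K => orderOf ζ = r) (nthRootsFinset r (1 : K)),
            (X ^ (n / r) - C ζ) := by
  obtain ⟨-, hp, -⟩ := hmixed
  obtain ⟨k, rfl⟩ := hn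
  obtain ⟨s, hsk, rfl⟩ := (Nat.dvd_prime_pow hp).mp hrn
  obtain _ | s := s
  · exact absurd (Nat.dvd_one.mp hpr) hp.ne_one
  obtain ⟨d, rfl⟩ := Nat.exists_eq_add_of_le hsk
  have : NeZero (p ^ (s + 1 + d)) := ⟨pow_ne_zero _ hp.ne_zero⟩
  have hcard : Nat.card (rootsOfUnity (p ^ (s + 1 + d)) K) = p ^ (s + 1) :=
    hr ▸ Nat.card_congr (Equiv.subtypeEquivRight fun x ↦ mem_rootsOfUnity _ x)
  have hroots (x : K) (hx : x ^ p ^ (s + 1 + d) = 1) : x ^ p ^ (s + 1) = 1 :=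
    hcard ▸ pow_natCard_rootsOfUnity_eq_one (NeZero.ne _) hx
  obtain ⟨ζ₀, hζ₀⟩ := exists_isPrimitiveRoot_natCard_rootsOfUnity (R := K) (p ^ (s + 1 + d))
  rw [hcard] at hζ₀
  have hpow : p ^ (s + 1 + d) = p ^ d * p ^ (s + 1) := by ring
  have hnr : p ^ (s + 1 + d) / p ^ (s + 1) = p ^ d := by
    rw [hpow, Nat.mul_div_cancel _ (pow_pos hp.pos _)]
  have hnp : p ^ (s + 1 + d) / p = p ^ d * p ^ s := by
    rw [hpow, pow_succ, ← mul_assoc, Nat.mul_div_cancel _ hp.pos]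
  rw [hnr, hnp, hpow]
  refine ⟨fun ζ hζ ↦ X_pow_sub_C_irreducible_of_isPrimitiveRoot hp
    (IsPrimitiveRoot.iff_orderOf.mpr hζ) hroots fun hp2 hs ↦ ?_,
    X_pow_sub_one_eq_mul_prod_orderOf_eq hp hζ₀ _⟩
  subst hp2 hs
  by_contra! hd
  exact h2 rfl (pow_dvd_pow 2 (by omega : 3 ≤ 0 + 1 + d)) rfl
end
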